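/- Let α be a linearly ordered type with a least element ⊥, let g be a permutation of α, let s be a finite set over α, and let m be a natural number. Then sort(image g s) ++ replicate(m, ⊥) ≤lex map g (sort s ++ replicate(m, ⊥)), where sort t denotes the strictly increasing sorted list of the elements of the finite set t, replicate(m, ⊥) is the list consisting of m copies of ⊥, ++ is list concatenation, image g s is the image of s under g, and map g applies g to every element of a list. -/

import Mathlib

/-!
Applying `g` to the sorted list of `s` gives a permutation of the sorted list of `g '' s`, and a
sorted list is lexicographically least among its permutations. On the padding, `⊥ ≤ g ⊥`. Since
the two prefixes have equal length, the comparisons of prefixes and paddings combine.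
-/

namespace List

theorem Pairwise.eq_or_lex_lt_of_perm {α : Type*} [LinearOrder α] {l₁ l₂ : List α}
    (hs : l₁.Pairwise (· ≤ ·)) (hp : l₁.Perm l₂) : l₁ = l₂ ∨ Lex (· < ·) l₁ l₂ := by
  induction l₁ generalizing l₂ with
  | nil => exact .inl hp.nil_eq
  | cons a t ih =>
    obtain _ | ⟨b, t₂⟩ := l₂
    · exact absurd hp.length_eq (by simp)
    obtain ⟨ha, ht⟩ := pairwise_cons.mp hs
    rcases lt_trichotomy a b with hab | rfl | hba
    · exact .inr (.rel hab)
    · exact (ih ht hp.cons_inv).imp (congrArg _) .cons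
    · obtain rfl | hb : b = a ∨ b ∈ t := mem_cons.mp (hp.mem_iff.mpr mem_cons_self)
      · exact absurd hba (lt_irrefl b)
      · exact absurd (ha b hb) hba.not_ge

theorem Lex.append_of_length_eq {α : Type*} {r : α → α → Prop} {l₁ l₂ : List α}
    (h : Lex r l₁ l₂) (hl : l₁.length = l₂.length) (u v : List α) :
    Lex r (l₁ ++ u) (l₂ ++ v) := by
  induction h with
  | nil => simp at hl
  | rel h => exact .rel h
  | cons _ ih => exact .cons (ih (by simpa using hl))

theorem eq_or_lex_append {α : Type*} {r : α → α → Prop} {l₁ l₂ u v : List α}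
    (hl : l₁ = l₂ ∨ Lex r l₁ l₂) (hlen : l₁.length = l₂.length) (hu : u = v ∨ Lex r u v) :
    l₁ ++ u = l₂ ++ v ∨ Lex r (l₁ ++ u) (l₂ ++ v) := by
  rcases hl with rfl | hl
  · exact hu.imp (congrArg _) (Lex.append_left r · l₁)
  · exact .inr (hl.append_of_length_eq hlen u v)

theorem replicate_eq_or_lex_lt {α : Type*} [PartialOrder α] {a b : α} (hab : a ≤ b) (m : ℕ) :
    replicate m a = replicate m b ∨ Lex (· < ·) (replicate m a) (replicate m b) := by
  rcases hab.eq_or_lt with rfl | hlt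
  · exact .inl rfl
  · cases m with
    | zero => exact .inl rfl
    | succ n => exact .inr (.rel hlt)

end List

theorem Finset.sort_image_perm_map {α β : Type*} [LinearOrder α] [LinearOrder β] {g : α → β}
    (hg : g.Injective) (s : Finset α) :
    ((s.image g).sort (· ≤ ·)).Perm ((s.sort (· ≤ ·)).map g) :=
  (List.perm_ext_iff_of_nodup (sort_nodup _ _) ((sort_nodup _ _).map hg)).mpr fun b => by
    simp only [mem_sort, mem_image, List.mem_map]

/-- ExplicitVariableSizeMarker/Flags representations of sets: padding with the
least value ⊥. -/
theorem explicit_marker_rep_lex {α : Type*} [LinearOrder α] [OrderBot α]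
    (g : Equiv.Perm α) (s : Finset α) (m : ℕ) :
    (s.image g).sort (· ≤ ·) ++ List.replicate m (⊥ : α) =
        (s.sort (· ≤ ·) ++ List.replicate m (⊥ : α)).map g ∨
      List.Lex (· < ·) ((s.image g).sort (· ≤ ·) ++ List.replicate m (⊥ : α))
        ((s.sort (· ≤ ·) ++ List.replicate m (⊥ : α)).map g) := by
  have hperm := Finset.sort_image_perm_map g.injective s
  rw [List.map_append, List.map_replicate]
  exact List.eq_or_lex_append ((s.image g).pairwise_sort _ |>.eq_or_lex_lt_of_perm hperm)
    hperm.length_eq (List.replicate_eq_or_lex_lt bot_le m)
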